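/- For all integers n ≥ 2 and k ≥ 2, λ(K_{n,n}, K_k) = 1, where K_{n,n} is the complete bipartite graph with both parts of size n and K_k is the complete graph on k vertices. -/

import Mathlib

/-!
With the discrete metric of `K_k`, write `f = (g, h)` on the two sides of `K_{n,n}` and let
`a`, `b`, `c` count the ordered pairs on which `g, g`, resp. `h, h`, resp. `g, h` agree. Since
`K_{n,n}` is `n`-regular, `R_f = 4 (n² - c) / (4 n² - a - b - 2 c)`. Counting through fibres,
`a + b - 2 c = ∑ i, (|g⁻¹ i| - |h⁻¹ i|)² ≥ 0`, so `R_f ≥ 1`, with equality for `g = h` nonconstant.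
-/

open scoped Classical
open Finset

/-- Degree of a vertex in a finite simple graph. -/
noncomputable def gdeg {V : Type*} [Fintype V] (G : SimpleGraph V) (v : V) : ℕ :=
  (G.neighborSet v).ncard

/-- The volume of a finite simple graph: the sum of the degrees of all vertices. -/
noncomputable def gvol {V : Type*} [Fintype V] (G : SimpleGraph V) : ℕ :=
  ∑ v, gdeg G v

/-- The Rayleigh-type quotient `R_f(G, X)` for an embedding `f : V(G) → X` where `X`
carries a distance function `d`.  The sum over ordered pairs of adjacent vertices divided
by `2` is the sum over edges of `G`; the sum over ordered pairs of distinct vertices divided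
by `2` is the sum over unordered pairs of distinct vertices of `G`. -/
noncomputable def Rf {V X : Type*} [Fintype V] (G : SimpleGraph V) (d : X → X → ℝ)
    (f : V → X) : ℝ :=
  ((gvol G : ℝ) * ((∑ u, ∑ v, if G.Adj u v then d (f u) (f v) ^ 2 else 0) / 2)) /
    ((∑ u, ∑ v, if u ≠ v then d (f u) (f v) ^ 2 * (gdeg G u : ℝ) * (gdeg G v : ℝ) else 0) / 2)

/-- `lam G d` is `λ(G, X)`: the infimum of `R_f(G, X)` over nonconstant `f : V(G) → X`. -/
noncomputable def lam {V X : Type*} [Fintype V] (G : SimpleGraph V) (d : X → X → ℝ) : ℝ :=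
  sInf {r | ∃ f : V → X, (∃ u v, f u ≠ f v) ∧ r = Rf G d f}

/-- The diameter of a finite simple graph: the maximum shortest-path distance over pairs. -/
noncomputable def gDiam {V : Type*} [Fintype V] (H : SimpleGraph V) : ℕ :=
  Finset.univ.sup fun p : V × V => H.dist p.1 p.2

/-- The maximum degree of a finite simple graph. -/
noncomputable def gMaxDeg {V : Type*} [Fintype V] (G : SimpleGraph V) : ℕ :=
  Finset.univ.sup (gdeg G)

/-- The minimum degree of a finite simple graph. -/
noncomputable def gMinDeg {V : Type*} [Fintype V] (G : SimpleGraph V) : ℕ :=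
  sInf (Set.range (gdeg G))

open SimpleGraph

section Agreements

variable {α β X : Type*} [Fintype α] [Fintype β]

noncomputable def agreements (p : α → X) (q : β → X) : ℝ :=
  ∑ x, ∑ y, if p x = q y then 1 else 0

lemma agreements_comm (p : α → X) (q : β → X) : agreements p q = agreements q p := by
  unfold agreements
  rw [Finset.sum_comm]
  simp_rw [eq_comm]

lemma card_mul_card_sub_agreements (p : α → X) (q : β → X) :
    (Fintype.card α * Fintype.card β : ℝ) - agreements p q =
      ∑ x, ∑ y, if p x = q y then 0 else 1 := by
  have h : ∀ x y, (if p x = q y then (0 : ℝ) else 1) = 1 - if p x = q y then 1 else 0 :=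
    fun x y => by split_ifs <;> norm_num
  simp only [h, agreements, Finset.sum_sub_distrib, Finset.sum_const, Finset.card_univ,
    nsmul_eq_mul, mul_one]

lemma agreements_lt_card_mul_card {p : α → X} {q : β → X} (h : ∃ x y, p x ≠ q y) :
    agreements p q < Fintype.card α * Fintype.card β := by
  obtain ⟨x, y, hxy⟩ := h
  rw [← sub_pos, card_mul_card_sub_agreements]
  refine Finset.sum_pos' (fun _ _ => Finset.sum_nonneg fun _ _ => by positivity)
    ⟨x, mem_univ x, Finset.sum_pos' (fun _ _ => by positivity) ⟨y, mem_univ y, by simp [hxy]⟩⟩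

lemma agreements_eq_sum_card_fiber [Fintype X] (p : α → X) (q : β → X) :
    agreements p q = ∑ i, ((#{x | p x = i} : ℕ) : ℝ) * (#{y | q y = i} : ℕ) := by
  simp only [Finset.natCast_card_filter, Finset.sum_mul_sum, agreements]
  symm
  rw [Finset.sum_comm]
  refine Finset.sum_congr rfl fun x _ => ?_
  rw [Finset.sum_comm]
  refine Finset.sum_congr rfl fun y _ => ?_
  simp [eq_comm]

lemma two_mul_agreements_le [Fintype X] (p : α → X) (q : β → X) :
    2 * agreements p q ≤ agreements p p + agreements q q := by
  simp only [agreements_eq_sum_card_fiber, Finset.mul_sum, ← Finset.sum_add_distrib]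
  refine Finset.sum_le_sum fun i _ => ?_
  nlinarith [sq_nonneg (((#{x | p x = i} : ℕ) : ℝ) - (#{y | q y = i} : ℕ))]

lemma agreements_self_sum (f : α ⊕ β → X) :
    agreements f f = agreements (f ∘ Sum.inl) (f ∘ Sum.inl) +
      2 * agreements (f ∘ Sum.inl) (f ∘ Sum.inr) + agreements (f ∘ Sum.inr) (f ∘ Sum.inr) := by
  have hcomm := agreements_comm (f ∘ Sum.inr) (f ∘ Sum.inl)
  simp only [agreements, Fintype.sum_sum_type, Function.comp, Finset.sum_add_distrib] at hcomm ⊢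
  linarith

end Agreements

lemma Rf_of_forall_gdeg_eq {V X : Type*} [Fintype V] {G : SimpleGraph V} {r : ℕ}
    (hG : ∀ v, gdeg G v = r) {d : X → X → ℝ} (hd : ∀ x, d x x = 0) (f : V → X) :
    Rf G d f = Fintype.card V * (∑ u, ∑ v, if G.Adj u v then d (f u) (f v) ^ 2 else 0) /
      (r * ∑ u, ∑ v, d (f u) (f v) ^ 2) := by
  have hvol : (gvol G : ℝ) = Fintype.card V * r := by simp [gvol, hG]
  have hden : ∀ u v, (if u ≠ v then d (f u) (f v) ^ 2 * (gdeg G u : ℝ) * gdeg G v else 0) =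
      r * r * d (f u) (f v) ^ 2 := by
    intro u v
    rw [hG, hG]
    split_ifs with h
    · ring
    · simp [not_not.mp h, hd]
  rw [Rf, hvol]
  simp only [hden, ← Finset.mul_sum]
  rcases eq_or_ne (r : ℝ) 0 with hr | hr
  · simp [hr]
  · field_simp

section CompleteBipartiteGraph

variable {α β X : Type*} [Fintype α] [Fintype β]

lemma gdeg_completeBipartiteGraph_inl (a : α) :
    gdeg (completeBipartiteGraph α β) (Sum.inl a) = Fintype.card β := by
  have h : (completeBipartiteGraph α β).neighborSet (Sum.inl a) = Set.range Sum.inr := by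
    ext (_ | _) <;> simp
  rw [gdeg, h, Set.ncard_range_of_injective Sum.inr_injective, Nat.card_eq_fintype_card]

lemma gdeg_completeBipartiteGraph_inr (b : β) :
    gdeg (completeBipartiteGraph α β) (Sum.inr b) = Fintype.card α := by
  have h : (completeBipartiteGraph α β).neighborSet (Sum.inr b) = Set.range Sum.inl := by
    ext (_ | _) <;> simp
  rw [gdeg, h, Set.ncard_range_of_injective Sum.inl_injective, Nat.card_eq_fintype_card]

lemma Rf_completeBipartiteGraph_dist_top [Nonempty α] (f : α ⊕ α → X) :
    Rf (completeBipartiteGraph α α) (fun a b => ((⊤ : SimpleGraph X).dist a b : ℝ)) f =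
      4 * (Fintype.card α * Fintype.card α - agreements (f ∘ Sum.inl) (f ∘ Sum.inr)) /
        (Fintype.card (α ⊕ α) * Fintype.card (α ⊕ α) - agreements f f) := by
  have hsq : ∀ a b : X, ((⊤ : SimpleGraph X).dist a b : ℝ) ^ 2 = if a = b then 0 else 1 := by
    intro a b
    rw [dist_top]
    split_ifs <;> simp
  have hdeg : ∀ v, gdeg (completeBipartiteGraph α α) v = Fintype.card α := by
    rintro (a | a)
    · exact gdeg_completeBipartiteGraph_inl a
    · exact gdeg_completeBipartiteGraph_inr a
  have hcut : (∑ u, ∑ v, if (completeBipartiteGraph α α).Adj u v then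
        (if f u = f v then (0 : ℝ) else 1) else 0) =
      (Fintype.card α * Fintype.card α - agreements (f ∘ Sum.inl) (f ∘ Sum.inr)) +
        (Fintype.card α * Fintype.card α - agreements (f ∘ Sum.inr) (f ∘ Sum.inl)) := by
    simp [card_mul_card_sub_agreements, Fintype.sum_sum_type]
  rw [Rf_of_forall_gdeg_eq hdeg (by simp)]
  simp only [hsq]
  rw [← card_mul_card_sub_agreements, hcut, agreements_comm (f ∘ Sum.inr), Fintype.card_sum]
  push_cast
  field_simp
  ring

lemma one_le_Rf_completeBipartiteGraph_dist_top [Nonempty α] [Fintype X] {f : α ⊕ α → X}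
    (hf : ∃ u v, f u ≠ f v) :
    1 ≤ Rf (completeBipartiteGraph α α) (fun a b => ((⊤ : SimpleGraph X).dist a b : ℝ)) f := by
  have hpos := sub_pos.mpr (agreements_lt_card_mul_card hf)
  rw [Rf_completeBipartiteGraph_dist_top, one_le_div hpos, agreements_self_sum,
    Fintype.card_sum]
  push_cast
  linarith [two_mul_agreements_le (f ∘ Sum.inl) (f ∘ Sum.inr)]

lemma Rf_completeBipartiteGraph_dist_top_sumElim_self {g : α → X} (hg : ∃ x y, g x ≠ g y) :
    Rf (completeBipartiteGraph α α) (fun a b => ((⊤ : SimpleGraph X).dist a b : ℝ))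
      (Sum.elim g g) = 1 := by
  obtain ⟨x, y, hxy⟩ := hg
  have : Nonempty α := ⟨x⟩
  have hpos := sub_pos.mpr (agreements_lt_card_mul_card (p := Sum.elim g g) (q := Sum.elim g g)
    ⟨.inl x, .inl y, hxy⟩)
  rw [Rf_completeBipartiteGraph_dist_top, div_eq_one_iff_eq hpos.ne', agreements_self_sum,
    Fintype.card_sum]
  simp only [Sum.elim_comp_inl, Sum.elim_comp_inr]
  push_cast
  ring

end CompleteBipartiteGraph

/-- For all integers `n ≥ 2` and `k ≥ 2`, `λ(K_{n,n}, K_k) = 1`, where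
`K_{n,n}` is the complete bipartite graph with both parts of size `n`. -/
theorem stmt_17 (n k : ℕ) (hn : 2 ≤ n) (hk : 2 ≤ k) :
    lam (completeBipartiteGraph (Fin n) (Fin n))
      (fun a b : Fin k => ((⊤ : SimpleGraph (Fin k)).dist a b : ℝ)) = 1 := by
  have : Nontrivial (Fin n) := Fin.nontrivial_iff_two_le.mpr hn
  have : Nontrivial (Fin k) := Fin.nontrivial_iff_two_le.mpr hk
  obtain ⟨x, y, hxy⟩ := exists_pair_ne (Fin n)
  obtain ⟨a, b, hab⟩ := exists_pair_ne (Fin k)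
  set g : Fin n → Fin k := Function.update (fun _ => b) x a
  have hg : g x ≠ g y := by simpa [g, hxy.symm] using hab
  refine IsLeast.csInf_eq ⟨⟨Sum.elim g g, ⟨.inl x, .inl y, hg⟩,
    (Rf_completeBipartiteGraph_dist_top_sumElim_self ⟨x, y, hg⟩).symm⟩, ?_⟩
  rintro r ⟨f, hf, rfl⟩
  exact one_le_Rf_completeBipartiteGraph_dist_top hf
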